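/- arXiv:1011.0633 — 2 statements merged into one kernel-verified Lean document; each statement's English description precedes it below -/
import Mathlib

section
/- For every (ρ, τ) ∈ [0,∞) × [0,∞) with (ρ, τ) ≠ (0, 0), there exists a unique λ > 0 such that λ ρ ≤ 1 and f_λ(ρ) = τ. (This expresses that the family of Pansu spheres {𝕊_λ}_{λ>0} is a foliation of ℝ^{2n+1} ∖ {0}.) -/
/-!
For fixed `ρ > 0` the map `λ ↦ f_λ(ρ)` is continuous on `(0, 1/ρ]`, vanishes at `1/ρ`, tends to
`+∞` as `λ → 0⁺` (its numerator tends to `arccos 0 = π/2`), and has derivative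
`-ρ³/√(1 - λ²ρ²) - 2 f_λ(ρ)/λ < 0`; so it is a decreasing bijection onto `[0, ∞)`.
For `ρ = 0` it is `π/(4λ²)`, which takes each value `τ > 0` exactly once.
-/

open Real

/-- Profile function of the Pansu sphere `𝕊_λ` of mean curvature `λ`. -/
noncomputable def pansuProfile (lam s : ℝ) : ℝ :=
  (1 / (2 * lam ^ 2)) * (lam * s * Real.sqrt (1 - lam ^ 2 * s ^ 2) + Real.arccos (lam * s))

open Filter Topology Set

lemma pansuProfile_zero_right (lam : ℝ) : pansuProfile lam 0 = π / (4 * lam ^ 2) := by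
  rw [pansuProfile, mul_zero, arccos_zero]
  ring

lemma pansuProfile_inv_self {ρ : ℝ} (hρ : ρ ≠ 0) : pansuProfile ρ⁻¹ ρ = 0 := by
  rw [pansuProfile, inv_mul_cancel₀ hρ, arccos_one, ← mul_pow, inv_mul_cancel₀ hρ]
  norm_num

lemma pansuProfile_pos {lam ρ : ℝ} (hl : lam ≠ 0) (h0 : 0 ≤ lam * ρ) (h1 : lam * ρ < 1) :
    0 < pansuProfile lam ρ := by
  have harccos := arccos_pos.2 h1
  unfold pansuProfile
  positivity

lemma continuousOn_pansuProfile (ρ : ℝ) : ContinuousOn (fun l => pansuProfile l ρ) {0}ᶜ := by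
  have hnum : Continuous fun l : ℝ => l * ρ * √(1 - l ^ 2 * ρ ^ 2) + arccos (l * ρ) := by
    fun_prop
  exact (continuousOn_const.div (by fun_prop) fun l hl => by simpa using hl).mul hnum.continuousOn

lemma hasDerivAt_pansuProfile {lam ρ : ℝ} (hl : lam ≠ 0) (h : lam ^ 2 * ρ ^ 2 < 1) :
    HasDerivAt (fun l => pansuProfile l ρ)
      (-(ρ ^ 3 / √(1 - lam ^ 2 * ρ ^ 2)) - 2 * pansuProfile lam ρ / lam) lam := by
  have hq : 0 < 1 - lam ^ 2 * ρ ^ 2 := by linarith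
  have hlin : HasDerivAt (fun l => l * ρ) ρ lam := by
    simpa using (hasDerivAt_id lam).mul_const ρ
  have hsqrt : HasDerivAt (fun l => √(1 - l ^ 2 * ρ ^ 2))
      (-(2 * lam * ρ ^ 2) / (2 * √(1 - lam ^ 2 * ρ ^ 2))) lam := by
    convert (((hasDerivAt_pow 2 lam).mul_const (ρ ^ 2)).const_sub 1).sqrt hq.ne' using 1
    simp
  have harccos : HasDerivAt (fun l => arccos (l * ρ))
      (-(1 / √(1 - lam ^ 2 * ρ ^ 2)) * ρ) lam := by
    rw [← mul_pow]
    exact (hasDerivAt_arccos (by nlinarith) (by nlinarith)).comp lam hlin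
  have hden : HasDerivAt (fun l => 2 * l ^ 2) (2 * (2 * lam)) lam := by
    simpa using (hasDerivAt_pow 2 lam).const_mul 2
  have hfun : (fun l => pansuProfile l ρ)
      = fun l => (l * ρ * √(1 - l ^ 2 * ρ ^ 2) + arccos (l * ρ)) / (2 * l ^ 2) := by
    funext l
    rw [pansuProfile]
    ring
  rw [hfun]
  refine (((hlin.mul hsqrt).add harccos).div hden (by positivity)).congr_deriv ?_
  have hs : √(1 - lam ^ 2 * ρ ^ 2) ≠ 0 := (sqrt_pos.2 hq).ne'
  have hs2 := sq_sqrt hq.le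
  simp only [pansuProfile, Pi.add_apply, Pi.mul_apply]
  generalize √(1 - lam ^ 2 * ρ ^ 2) = s at hs hs2 ⊢
  field_simp
  linear_combination ρ * lam * hs2

lemma tendsto_pansuProfile_nhdsGT_zero (ρ : ℝ) :
    Tendsto (fun l => pansuProfile l ρ) (𝓝[>] 0) atTop := by
  have hnum : Tendsto (fun l => (l * ρ * √(1 - l ^ 2 * ρ ^ 2) + arccos (l * ρ)) / 2)
      (𝓝[>] 0) (𝓝 (π / 4)) := by
    have hcont : Continuous fun l : ℝ => (l * ρ * √(1 - l ^ 2 * ρ ^ 2) + arccos (l * ρ)) / 2 := by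
      fun_prop
    convert (hcont.tendsto 0).mono_left nhdsWithin_le_nhds using 2
    simp only [zero_mul, zero_add, arccos_zero]
    ring
  convert ((tendsto_pow_atTop two_ne_zero).comp tendsto_inv_nhdsGT_zero).atTop_mul_pos
    (by positivity) hnum using 2 with l
  simp only [pansuProfile, Function.comp_apply]
  ring

lemma strictAntiOn_pansuProfile {ρ : ℝ} (hρ : 0 < ρ) :
    StrictAntiOn (fun l => pansuProfile l ρ) (Ioc 0 ρ⁻¹) := by
  refine strictAntiOn_of_deriv_neg (convex_Ioc _ _)
    ((continuousOn_pansuProfile ρ).mono fun l hl => hl.1.ne') fun l hl => ?_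
  rw [interior_Ioc] at hl
  obtain ⟨hl0, hlρ⟩ : 0 < l ∧ l * ρ < 1 := ⟨hl.1, by simpa [← one_div, lt_div_iff₀ hρ] using hl.2⟩
  have hq : 0 < 1 - l ^ 2 * ρ ^ 2 := by nlinarith [mul_pos hl0 hρ]
  rw [(hasDerivAt_pansuProfile hl0.ne' (by linarith)).deriv]
  have hf := pansuProfile_pos hl0.ne' (by positivity) hlρ
  have hρ3 : 0 < ρ ^ 3 / √(1 - l ^ 2 * ρ ^ 2) := by positivity
  have h2f : 0 < 2 * pansuProfile l ρ / l := by positivity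
  linarith

lemma exists_pansuProfile_eq {ρ τ : ℝ} (hρ : 0 < ρ) (hτ : 0 ≤ τ) :
    ∃ lam ∈ Ioc 0 ρ⁻¹, pansuProfile lam ρ = τ := by
  obtain ⟨a, hτa, ha⟩ := (((tendsto_pansuProfile_nhdsGT_zero ρ).eventually_ge_atTop τ).and
    (Ioo_mem_nhdsGT (inv_pos.2 hρ))).exists
  have hcont : ContinuousOn (fun l => pansuProfile l ρ) (Icc a ρ⁻¹) :=
    (continuousOn_pansuProfile ρ).mono fun l hl => (ha.1.trans_le hl.1).ne'
  obtain ⟨lam, hlam, hval⟩ := intermediate_value_Icc' ha.2.le hcont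
    ⟨(pansuProfile_inv_self hρ.ne').symm ▸ hτ, hτa⟩
  exact ⟨lam, ⟨ha.1.trans_le hlam.1, hlam.2⟩, hval⟩

lemma existsUnique_pansuProfile_eq {ρ τ : ℝ} (hρ : 0 < ρ) (hτ : 0 ≤ τ) :
    ∃! lam : ℝ, 0 < lam ∧ lam * ρ ≤ 1 ∧ pansuProfile lam ρ = τ := by
  have hmem : ∀ lam, lam ∈ Ioc 0 ρ⁻¹ ↔ 0 < lam ∧ lam * ρ ≤ 1 := fun lam => by
    rw [mem_Ioc, ← one_div, le_div_iff₀ hρ]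
  obtain ⟨lam, hlam, hval⟩ := exists_pansuProfile_eq hρ hτ
  refine ⟨lam, ⟨((hmem lam).1 hlam).1, ((hmem lam).1 hlam).2, hval⟩, fun μ hμ => ?_⟩
  exact (strictAntiOn_pansuProfile hρ).injOn ((hmem μ).2 ⟨hμ.1, hμ.2.1⟩) hlam
    (hμ.2.2.trans hval.symm)

lemma existsUnique_pansuProfile_zero_right_eq {τ : ℝ} (hτ : 0 < τ) :
    ∃! lam : ℝ, 0 < lam ∧ pansuProfile lam 0 = τ := by
  have key : ∀ lam, 0 < lam → (pansuProfile lam 0 = τ ↔ √(π / (4 * τ)) = lam) := fun lam hl => by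
    rw [pansuProfile_zero_right, sqrt_eq_iff_mul_self_eq_of_pos hl, div_eq_iff (by positivity),
      eq_div_iff (by positivity)]
    constructor <;> intro h <;> linarith
  have hpos : 0 < √(π / (4 * τ)) := sqrt_pos.2 (by positivity)
  exact ⟨_, ⟨hpos, (key _ hpos).2 rfl⟩, fun lam h => ((key lam h.1).1 h.2).symm⟩

/-- For every `(ρ, τ) ∈ [0,∞) × [0,∞)` with `(ρ, τ) ≠ (0,0)` there is a unique `λ > 0`
with `λρ ≤ 1` and `f_λ(ρ) = τ`: the Pansu spheres foliate the punctured space. -/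
theorem pansuSpheres_foliate (ρ τ : ℝ) (hρ : 0 ≤ ρ) (hτ : 0 ≤ τ)
    (hne : (ρ, τ) ≠ (0, 0)) :
    ∃! lam : ℝ, 0 < lam ∧ lam * ρ ≤ 1 ∧ pansuProfile lam ρ = τ := by
  rcases hρ.eq_or_lt with rfl | hρ
  · have hτ : 0 < τ := hτ.lt_of_ne (by rintro rfl; exact hne rfl)
    simpa using existsUnique_pansuProfile_zero_right_eq hτ
  · exact existsUnique_pansuProfile_eq hρ hτ
end

section
/- Let Q > 1 and set q = (Q − 1)/Q, and let C_I > 0, C > 0 and r₀ ∈ ℝ. Then there is no function V : [r₀, ∞) → ℝ that is differentiable, everywhere positive, nonincreasing, tends to 0 as r → ∞, and satisfies the differential inequality C_I V(r)^q ≤ C V(r) + 2 |V'(r)| for all r ≥ r₀. -/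
/-!
Since `V → 0` and `q < 1`, eventually `C V = C V^(1-q) · V^q ≤ (C_I/2) V^q`, so the inequality
forces `V' ≤ -(C_I/4) V^q`. Then `V^(1-q)` decreases with slope at most `-(1-q) C_I/4`, so it
becomes negative in finite time, which is impossible for a positive `V`.
-/

open Filter Set Topology

lemma AntitoneOn.deriv_nonpos_of_mem_Ici {g : ℝ → ℝ} {a x : ℝ} (hg : AntitoneOn g (Ici a))
    (hx : a ≤ x) (hd : DifferentiableAt ℝ g x) : deriv g x ≤ 0 := by
  have hacc : AccPt x (𝓟 (Ici x)) :=
    accPt_principal_iff_nhdsWithin.2 (by rw [Ici_sdiff_left]; infer_instance)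
  exact hd.hasDerivAt.hasDerivWithinAt.nonpos_of_antitoneOn hacc
    (hg.mono (Ici_subset_Ici.2 hx))

lemma exists_neg_of_deriv_le_neg {f : ℝ → ℝ} {a K : ℝ} (hK : 0 < K)
    (hf : ∀ x, a ≤ x → DifferentiableAt ℝ f x) (hf' : ∀ x, a ≤ x → deriv f x ≤ -K) :
    ∃ x, a ≤ x ∧ f x < 0 := by
  set b := a + |f a| / K + 1
  have hab : a ≤ b := by
    have : 0 ≤ |f a| / K := by positivity
    linarith
  have hdecr : f b - f a ≤ -K * (b - a) :=
    (convex_Ici a).image_sub_le_mul_sub_of_deriv_le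
      (fun x hx => (hf x hx).continuousAt.continuousWithinAt)
      (fun x hx => (hf x (le_of_lt (by simpa using hx))).differentiableWithinAt)
      (fun x hx => hf' x (le_of_lt (by simpa using hx))) a self_mem_Ici b hab hab
  have hKb : K * (b - a) = |f a| + K := by
    simp only [b]
    field_simp
    ring
  refine ⟨b, hab, ?_⟩
  linarith [le_abs_self (f a)]

lemma exists_nonpos_of_deriv_le_neg_mul_rpow {V : ℝ → ℝ} {a c q : ℝ} (hc : 0 < c) (hq : q < 1)
    (hV : ∀ x, a ≤ x → DifferentiableAt ℝ V x) (hV' : ∀ x, a ≤ x → deriv V x ≤ -c * V x ^ q) :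
    ∃ x, a ≤ x ∧ V x ≤ 0 := by
  by_contra! hpos
  have hg : ∀ x, a ≤ x →
      HasDerivAt (fun y => V y ^ (1 - q)) (deriv V x * (1 - q) * V x ^ (-q)) x := by
    intro x hx
    simpa using (hV x hx).hasDerivAt.rpow_const (p := 1 - q) (Or.inl (hpos x hx).ne')
  have hg' : ∀ x, a ≤ x → deriv (fun y => V y ^ (1 - q)) x ≤ -((1 - q) * c) := by
    intro x hx
    have hcancel : V x ^ q * V x ^ (-q) = 1 := by
      rw [Real.rpow_neg (hpos x hx).le, mul_inv_cancel₀ (Real.rpow_pos_of_pos (hpos x hx) q).ne']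
    calc deriv (fun y => V y ^ (1 - q)) x = deriv V x * ((1 - q) * V x ^ (-q)) := by
          rw [(hg x hx).deriv, mul_assoc]
      _ ≤ -c * V x ^ q * ((1 - q) * V x ^ (-q)) :=
          mul_le_mul_of_nonneg_right (hV' x hx)
            (mul_nonneg (sub_pos.2 hq).le (Real.rpow_pos_of_pos (hpos x hx) _).le)
      _ = -((1 - q) * c) := by linear_combination (-c * (1 - q)) * hcancel
  obtain ⟨x, hx, hneg⟩ :=
    exists_neg_of_deriv_le_neg (mul_pos (sub_pos.2 hq) hc)
      (fun x hx => (hg x hx).differentiableAt) hg'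
  exact hneg.not_ge (Real.rpow_pos_of_pos (hpos x hx) _).le

lemma le_neg_mul_rpow_of_mul_rpow_le_add_abs {v d C_I C q : ℝ} (hv : 0 < v) (hd : d ≤ 0)
    (hsmall : C * v ^ (1 - q) ≤ C_I / 2) (h : C_I * v ^ q ≤ C * v + 2 * |d|) :
    d ≤ -(C_I / 4) * v ^ q := by
  have hCv : C * v ≤ C_I / 2 * v ^ q :=
    calc C * v = C * v ^ (1 - q) * v ^ q := by
          rw [mul_assoc, ← Real.rpow_add hv, sub_add_cancel, Real.rpow_one]
      _ ≤ C_I / 2 * v ^ q :=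
          mul_le_mul_of_nonneg_right hsmall (Real.rpow_pos_of_pos hv q).le
  rw [abs_of_nonpos hd] at h
  linarith

theorem no_positive_solution_of_isoperimetric_ODE_general (Q : ℝ) (hQ : 1 < Q) (q : ℝ)
    (hq : q = (Q - 1) / Q) (C_I : ℝ) (hCI : 0 < C_I) (C : ℝ) (r₀ : ℝ) :
    ¬ ∃ V : ℝ → ℝ,
      (∀ r, r₀ ≤ r → DifferentiableAt ℝ V r) ∧
      (∀ r, r₀ ≤ r → 0 < V r) ∧
      AntitoneOn V (Set.Ici r₀) ∧
      Tendsto V atTop (nhds 0) ∧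
      (∀ r, r₀ ≤ r → C_I * V r ^ q ≤ C * V r + 2 * |deriv V r|) := by
  rintro ⟨V, hdiff, hpos, hanti, hlim, hineq⟩
  have hq1 : q < 1 := by rw [hq, div_lt_one (by linarith)]; linarith
  have hsmall : ∀ᶠ r in atTop, C * V r ^ (1 - q) < C_I / 2 := by
    have h0 : Tendsto (fun r => C * V r ^ (1 - q)) atTop (𝓝 0) := by
      simpa [Real.zero_rpow (sub_pos.2 hq1).ne'] using
        (hlim.rpow_const (Or.inr (sub_pos.2 hq1).le)).const_mul C
    exact h0.eventually (gt_mem_nhds (by positivity))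
  obtain ⟨R, hR⟩ := eventually_atTop.1 hsmall
  have ha : ∀ r, max r₀ R ≤ r → r₀ ≤ r := fun r hr => le_of_max_le_left hr
  have hderiv : ∀ r, max r₀ R ≤ r → deriv V r ≤ -(C_I / 4) * V r ^ q := fun r hr =>
    le_neg_mul_rpow_of_mul_rpow_le_add_abs (hpos r (ha r hr))
      (hanti.deriv_nonpos_of_mem_Ici (ha r hr) (hdiff r (ha r hr)))
      (hR r (le_of_max_le_right hr)).le (hineq r (ha r hr))
  obtain ⟨r, hr, hVr⟩ := exists_nonpos_of_deriv_le_neg_mul_rpow (by positivity) hq1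
    (fun r hr => hdiff r (ha r hr)) hderiv
  exact (hpos r (ha r hr)).not_ge hVr

/-- The analytic core of the boundedness of isoperimetric regions: there is no positive,
nonincreasing, differentiable function `V` on `[r₀, ∞)` tending to `0` at infinity and
satisfying `C_I V(r)^q ≤ C V(r) + 2|V'(r)|` with `q = (Q−1)/Q`, `Q > 1`. -/
theorem no_positive_solution_of_isoperimetric_ODE (Q : ℝ) (hQ : 1 < Q) (q : ℝ)
    (hq : q = (Q - 1) / Q) (C_I : ℝ) (hCI : 0 < C_I) (C : ℝ) (hC : 0 < C) (r₀ : ℝ) :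
    ¬ ∃ V : ℝ → ℝ,
      (∀ r, r₀ ≤ r → DifferentiableAt ℝ V r) ∧
      (∀ r, r₀ ≤ r → 0 < V r) ∧
      AntitoneOn V (Set.Ici r₀) ∧
      Tendsto V atTop (nhds 0) ∧
      (∀ r, r₀ ≤ r → C_I * V r ^ q ≤ C * V r + 2 * |deriv V r|) :=
  no_positive_solution_of_isoperimetric_ODE_general Q hQ q hq C_I hCI C r₀
end
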